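/- Let G = A₄ be the alternating group on {1,2,3,4}, and let H_K = ⟨(1 2 3)⟩ (cyclic of order 3), H_{K₃} = {id, (1 2)(3 4), (1 3)(2 4), (1 4)(2 3)} (the Klein four subgroup), and H_F = {id, (1 2)(3 4)}. Then for every finite-dimensional complex representation V of G, dim_ℂ V^{H_K} + dim_ℂ V^{H_{K₃}} = dim_ℂ V^{H_F} + dim_ℂ V^{G}, where V^{H} denotes the subspace of vectors fixed by all elements of the subgroup H. -/

import Mathlib

/-!
By Frobenius reciprocity, `|G| · dim V^H = ∑ g, π_H(g) χ_V(g)` where `π_H` is the permutation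
character of `G ⧸ H`: average `χ_V` over `H` and use that `χ_V` is a class function. Hence a
linear relation among permutation characters gives the same relation among dimensions of fixed
spaces, and on `A₄` one checks element by element that `π_K + π_{K₃} = π_F + π_{A₄}`.
-/

/-- `A₄`, the alternating group on `{1,2,3,4}`. -/
abbrev A4 : Type := ↥(alternatingGroup (Fin 4))

/-- The subgroup `⟨(1 2 3)⟩` of `A₄`: the stabilizer of `4`, cyclic of order 3. -/
def HKA : Subgroup A4 :=
  Subgroup.comap (alternatingGroup (Fin 4)).subtype
    (Subgroup.zpowers (Equiv.swap 0 1 * Equiv.swap 1 2))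

/-- The Klein four subgroup `{id, (1 2)(3 4), (1 3)(2 4), (1 4)(2 3)}` of `A₄`. -/
def HK3A : Subgroup A4 :=
  Subgroup.comap (alternatingGroup (Fin 4)).subtype
    { carrier := {σ | σ = 1 ∨ σ = Equiv.swap 0 1 * Equiv.swap 2 3 ∨
        σ = Equiv.swap 0 2 * Equiv.swap 1 3 ∨ σ = Equiv.swap 0 3 * Equiv.swap 1 2}
      one_mem' := by decide
      mul_mem' := by decide
      inv_mem' := by decide }

/-- The subgroup `{id, (1 2)(3 4)}` of `A₄`. -/
def HFA : Subgroup A4 :=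
  Subgroup.comap (alternatingGroup (Fin 4)).subtype
    (Subgroup.zpowers (Equiv.swap 0 1 * Equiv.swap 2 3))

open Equiv Finset Module Representation

noncomputable def conjMemCount {G : Type*} [Group G] (H : Subgroup G) (g : G) : ℕ :=
  Nat.card {t : G // t * g * t⁻¹ ∈ H}

/-- The number of fixed points of `g` on `G ⧸ H`, i.e. the permutation character `Ind_H^G 1`
at `g`: the coset `t⁻¹ H` is fixed by `g` iff `t * g * t⁻¹ ∈ H`, and each coset has `|H|`
representatives. -/
noncomputable def permChar {G : Type*} [Group G] (H : Subgroup G) (g : G) : ℚ :=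
  conjMemCount H g / Nat.card H

section Subgroup

variable {G : Type*} [Group G] [Fintype G]

theorem sum_conjMemCount_nsmul {M : Type*} [AddCommMonoid M] (H : Subgroup G)
    [DecidablePred (· ∈ H)] (f : G → M) (hf : ∀ g t, f (t * g * t⁻¹) = f g) :
    ∑ g, conjMemCount H g • f g = Nat.card G • ∑ h : H, f h := by
  have hcount (g : G) : conjMemCount H g = #{t | t * g * t⁻¹ ∈ H} := by
    rw [conjMemCount, Nat.card_eq_fintype_card, Fintype.card_subtype]
  calc ∑ g, conjMemCount H g • f g
      = ∑ t, ∑ g, if t * g * t⁻¹ ∈ H then f (t * g * t⁻¹) else 0 := by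
        simp only [hcount, card_filter, sum_smul, ite_smul, one_smul, zero_smul, hf]
        exact sum_comm
    _ = ∑ _t : G, ∑ h, if h ∈ H then f h else 0 := by
        refine sum_congr rfl fun t _ => ?_
        exact Fintype.sum_equiv (MulAut.conj t).toEquiv _ _ fun g => rfl
    _ = Nat.card G • ∑ h : H, f h := by
        rw [sum_const, card_univ, Nat.card_eq_fintype_card, ← sum_filter,
          sum_subtype _ mem_filter_univ]

theorem conjMemCount_eq_card_filter {H : Subgroup G} {p : G → Prop} [DecidablePred p]
    (hH : ∀ x, x ∈ H ↔ p x) (g : G) : conjMemCount H g = #{t | p (t * g * t⁻¹)} := by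
  rw [conjMemCount, Nat.card_congr (subtypeEquivRight fun t => hH _), Nat.card_eq_fintype_card,
    Fintype.card_subtype]

theorem Subgroup.card_eq_card_filter {H : Subgroup G} {p : G → Prop} [DecidablePred p]
    (hH : ∀ x, x ∈ H ↔ p x) : Nat.card H = #{x | p x} := by
  rw [Nat.card_congr (subtypeEquivRight hH), Nat.card_eq_fintype_card, Fintype.card_subtype]

theorem permChar_top (g : G) : permChar ⊤ g = 1 := by
  have hcount : conjMemCount ⊤ g = Nat.card G :=
    Nat.card_congr (subtypeUnivEquiv fun _ => Subgroup.mem_top _)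
  rw [permChar, hcount, Subgroup.card_top, div_self (Nat.cast_ne_zero.mpr Nat.card_pos.ne')]

end Subgroup

theorem invariants_comp_of_surjective {k G H V : Type*} [CommRing k] [Group G] [Group H]
    [AddCommGroup V] [Module k V] (ρ : Representation k G V) {f : H →* G}
    (hf : Function.Surjective f) : invariants (ρ.comp f) = invariants ρ := by
  ext v
  simp only [mem_invariants, MonoidHom.coe_comp, Function.comp_apply, hf.forall]

section Representation

variable {k G V : Type*} [Field k] [CharZero k] [Group G] [Fintype G]
  [AddCommGroup V] [Module k V] [FiniteDimensional k V] (ρ : Representation k G V)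

theorem card_mul_finrank_invariants :
    (Nat.card G : k) * finrank k (invariants ρ) = ∑ g, ρ.character g := by
  have hG : (Nat.card G : k) ≠ 0 := Nat.cast_ne_zero.mpr Nat.card_pos.ne'
  have := invertibleOfNonzero hG
  rw [← card_inv_mul_sum_char_eq_finrank, mul_inv_cancel_left₀ hG]

theorem card_mul_finrank_invariants_comp_subtype (H : Subgroup G) :
    (Nat.card G : k) * finrank k (invariants (ρ.comp H.subtype))
      = ∑ g, (permChar H g : k) * ρ.character g := by
  classical
  have hsub : (Nat.card H : k) * finrank k (invariants (ρ.comp H.subtype))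
      = ∑ h : H, ρ.character h := card_mul_finrank_invariants (ρ.comp H.subtype)
  have hsum := sum_conjMemCount_nsmul H ρ.character fun g t => char_conj ρ g t
  simp only [nsmul_eq_mul, ← hsub] at hsum
  simp only [permChar, Rat.cast_div, Rat.cast_natCast, div_mul_eq_mul_div, ← sum_div, hsum]
  field_simp

theorem finrank_invariants_add_eq_of_permChar_add_eq {H₁ H₂ H₃ H₄ : Subgroup G}
    (h : ∀ g, permChar H₁ g + permChar H₂ g = permChar H₃ g + permChar H₄ g) :
    finrank k (invariants (ρ.comp H₁.subtype)) + finrank k (invariants (ρ.comp H₂.subtype))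
      = finrank k (invariants (ρ.comp H₃.subtype))
        + finrank k (invariants (ρ.comp H₄.subtype)) := by
  have hG : (Nat.card G : k) ≠ 0 := Nat.cast_ne_zero.mpr Nat.card_pos.ne'
  apply Nat.cast_injective (R := k)
  apply mul_left_cancel₀ hG
  push_cast
  simp only [mul_add, card_mul_finrank_invariants_comp_subtype, ← sum_add_distrib, ← add_mul]
  refine sum_congr rfl fun g _ => ?_
  exact_mod_cast congrArg (fun q : ℚ => (q : k) * ρ.character g) (h g)

end Representation

theorem mem_HKA_iff (x : A4) :
    x ∈ HKA ↔ x.1 ∈ (range 3).image ((swap 0 1 * swap 1 2 : Perm (Fin 4)) ^ ·) := by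
  rw [HKA, Subgroup.mem_comap, Subgroup.coe_subtype, mem_zpowers_iff_mem_range_orderOf,
    orderOf_eq_prime (p := 3) (by decide) (by decide)]

theorem mem_HK3A_iff (x : A4) :
    x ∈ HK3A ↔ x.1 = 1 ∨ x.1 = swap 0 1 * swap 2 3 ∨
      x.1 = swap 0 2 * swap 1 3 ∨ x.1 = swap 0 3 * swap 1 2 :=
  Iff.rfl

theorem mem_HFA_iff (x : A4) :
    x ∈ HFA ↔ x.1 ∈ (range 2).image ((swap 0 1 * swap 2 3 : Perm (Fin 4)) ^ ·) := by
  rw [HFA, Subgroup.mem_comap, Subgroup.coe_subtype, mem_zpowers_iff_mem_range_orderOf,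
    orderOf_eq_prime (p := 2) (by decide) (by decide)]

theorem permChar_HKA_add_permChar_HK3A (g : A4) :
    permChar HKA g + permChar HK3A g = permChar HFA g + permChar ⊤ g := by
  have hcount : 4 * conjMemCount HKA g + 3 * conjMemCount HK3A g
      = 6 * conjMemCount HFA g + 12 := by
    rw [conjMemCount_eq_card_filter mem_HKA_iff, conjMemCount_eq_card_filter mem_HK3A_iff,
      conjMemCount_eq_card_filter mem_HFA_iff]
    revert g
    decide
  have hK : Nat.card HKA = 3 := by rw [Subgroup.card_eq_card_filter mem_HKA_iff]; decide
  have hK3 : Nat.card HK3A = 4 := by rw [Subgroup.card_eq_card_filter mem_HK3A_iff]; decide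
  have hF : Nat.card HFA = 2 := by rw [Subgroup.card_eq_card_filter mem_HFA_iff]; decide
  rw [permChar_top, permChar, permChar, permChar, hK, hK3, hF]
  have hcount' : (4 * conjMemCount HKA g + 3 * conjMemCount HK3A g : ℚ)
      = 6 * conjMemCount HFA g + 12 := by exact_mod_cast hcount
  push_cast
  linarith

theorem fixed_space_dim_identity_A4
    (V : Type) [AddCommGroup V] [Module ℂ V] [FiniteDimensional ℂ V]
    (ρ : Representation ℂ A4 V) :
    Module.finrank ℂ (Representation.invariants (ρ.comp HKA.subtype))
        + Module.finrank ℂ (Representation.invariants (ρ.comp HK3A.subtype))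
      = Module.finrank ℂ (Representation.invariants (ρ.comp HFA.subtype))
        + Module.finrank ℂ (Representation.invariants ρ) := by
  rw [← invariants_comp_of_surjective ρ (f := (⊤ : Subgroup A4).subtype)
    fun g => ⟨⟨g, Subgroup.mem_top g⟩, rfl⟩]
  exact finrank_invariants_add_eq_of_permChar_add_eq ρ permChar_HKA_add_permChar_HK3A
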